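/- arXiv:1306.6100 — 2 statements merged into one kernel-verified Lean document; each statement's English description precedes it below -/
import Mathlib

section
/- The semi-direct product extension 1 → K → K ⋊ G → G → 1 is isomorphic (over G) to the trivial product extension K × G if and only if the action ρ: G → Aut(K) has image contained in Inn(K) and there exists a group homomorphism σ: G → K such that τ ∘ σ = ρ, where τ: K → Inn(K) is the conjugation map. -/
open SemidirectProduct

/-- The split extension `1 → K → K ⋊ G → G → 1` is isomorphic over `G`
to the trivial product extension `K × G` if and only if the action `ρ : G → Aut K` has
image contained in the inner automorphisms and there is a group homomorphism
`σ : G → K` with `τ ∘ σ = ρ`, where `τ = MulAut.conj` is the conjugation map. -/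
theorem stmt_0 {K G : Type} [Group K] [Group G] (ρ : G →* MulAut K) :
    (∃ ψ : (K ⋊[ρ] G) ≃* K × G, ∀ x : K ⋊[ρ] G, (ψ x).2 = x.right) ↔
      ((∀ g : G, ∃ k : K, ρ g = MulAut.conj k) ∧
        ∃ σ : G →* K, ∀ g : G, MulAut.conj (σ g) = ρ g) := by
  constructor
  · rintro ⟨ψ, hψ⟩
    -- the induced automorphism of K
    have hsecond : ∀ k : K, ψ (inl k) = ((ψ (inl k)).1, 1) := fun k =>
      Prod.ext rfl (by simpa using hψ (inl k))
    have hleftinv : ∀ k : K, (ψ.symm ((ψ (inl k)).1, 1)).left = k := by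
      intro k
      rw [← hsecond k, ψ.symm_apply_apply]; simp
    have hrightinv : ∀ k : K, (ψ (inl (ψ.symm (k, 1)).left)).1 = k := by
      intro k
      have hr : (ψ.symm (k, 1)).right = 1 := by
        have := hψ (ψ.symm (k, 1))
        rw [ψ.apply_symm_apply] at this
        exact this.symm
      have hxl : inl (ψ.symm (k, 1)).left = ψ.symm (k, 1) := by
        rw [← inl_left_mul_inr_right (ψ.symm (k, 1)), hr]; simp
      rw [hxl, ψ.apply_symm_apply]
    have hmul : ∀ a b : K, (ψ (inl (a * b))).1 = (ψ (inl a)).1 * (ψ (inl b)).1 := by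
      intro a b
      simp only [map_mul, Prod.fst_mul]
    set φ : K ≃* K :=
      { toFun := fun k => (ψ (inl k)).1
        invFun := fun k => (ψ.symm (k, 1)).left
        left_inv := hleftinv
        right_inv := hrightinv
        map_mul' := hmul } with hφ
    set σ₀ : G → K := fun g => (ψ (inr g)).1 with hσ₀
    have hinr : ∀ g : G, ψ (inr g) = (σ₀ g, g) := fun g =>
      Prod.ext rfl (by simpa using hψ (inr g))
    have key : ∀ (g : G) (k : K), φ (ρ g k) = σ₀ g * φ k * (σ₀ g)⁻¹ := by
      intro g k
      have := congrArg ψ (inl_aut (φ := ρ) g k)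
      rw [map_mul, map_mul, map_inv, hinr g, hsecond k] at this
      have := congrArg Prod.fst this
      simpa [hφ] using this
    have hσ₀mul : ∀ g h : G, σ₀ (g * h) = σ₀ g * σ₀ h := by
      intro g h
      simp only [hσ₀, map_mul, Prod.fst_mul]
    have hσ₀one : σ₀ 1 = 1 := by
      simp only [hσ₀, map_one]; rfl
    set σ : G →* K :=
      { toFun := fun g => φ.symm (σ₀ g)
        map_one' := by show φ.symm (σ₀ 1) = 1; rw [hσ₀one]; simp
        map_mul' := fun g h => by show φ.symm (σ₀ (g*h)) = φ.symm (σ₀ g) * φ.symm (σ₀ h); rw [hσ₀mul]; simp } with hσdef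
    have hconj : ∀ g : G, MulAut.conj (σ g) = ρ g := by
      intro g
      ext k
      apply φ.injective
      rw [key g k]
      simp [hσdef, mul_assoc]
    exact ⟨fun g => ⟨σ g, (hconj g).symm⟩, σ, hconj⟩
  · rintro ⟨-, σ, hσ⟩
    have hconj : ∀ (g : G) (k : K), ρ g k = σ g * k * (σ g)⁻¹ := fun g k => by
      rw [← hσ g]; rfl
    refine ⟨{ toFun := fun x => (x.left * σ x.right, x.right)
              invFun := fun p => ⟨p.1 * (σ p.2)⁻¹, p.2⟩
              left_inv := fun x => by ext <;> simp
              right_inv := fun p => by simp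
              map_mul' := fun a b => by
                ext
                · show a.left * ρ a.right b.left * σ (a.right * b.right) =
                    a.left * σ a.right * (b.left * σ b.right)
                  rw [hconj, map_mul]
                  group
                · rfl }, fun x => rfl⟩
end

section
/- The shuffle homomorphism τ satisfies the equivariance property τ((a⁻¹,h⁻¹)·(g₁,...,g_p,g‖k₁,...,k_q,k)) = (ha)⁻¹ · τ(g₁,...,g_p,g‖k₁,...,k_q,k) with respect to the (K ⋊ K)-module structure on the source and the K-module structure on the target via the multiplication homomorphism μ(k,g) = kg, and it is compatible with augmentations: (ε ⊗ ε)(k,g) = ε(kg). -/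
open Finsupp

namespace Stmt8

/-- Merge the entries at positions `i` and `i+1` of a tuple. -/
def mergeD {α : Type} [Mul α] {n : ℕ} (i : ℕ) (h : Fin (n + 1) → α) : Fin n → α :=
  fun j =>
    if (j : ℕ) < i then h j.castSucc
    else if (j : ℕ) = i then h j.castSucc * h j.succ
    else h j.succ

variable (K : Type) [Group K]

/-- `n`-chains of the bar resolution of `K`. -/
abbrev Ch (n : ℕ) : Type := (Fin (n + 1) → K) →₀ ℤ

/-- The bar differential on a generator. -/
noncomputable def barDgen {n : ℕ} (h : Fin (n + 2) → K) : Ch K n :=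
  Finsupp.single (fun j => h j.succ) 1 +
    ∑ i ∈ Finset.range (n + 1), ((-1 : ℤ) ^ (i + 1)) • Finsupp.single (mergeD i h) 1

/-- The bar differential `∂_K`. -/
noncomputable def barD (n : ℕ) : Ch K (n + 1) →+ Ch K n :=
  Finsupp.liftAddHom fun h => (zmultiplesHom (Ch K n)) (barDgen K h)

/-- Degree `n` part of `Tot(C_*(EK,ℤ) ⊗_ℤ C_*(EK,ℤ))` (for the conjugation action). -/
abbrev TotCh (n : ℕ) : Type :=
  ((Σ p : Fin (n + 1), (Fin ((p : ℕ) + 1) → K) × (Fin ((n - (p : ℕ)) + 1) → K)) →₀ ℤ)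

/-- The total differential `∂ ⊗ 1 ⊕ (-1)^p 1 ⊗ ∂` on a generator. -/
noncomputable def totDgen {n : ℕ}
    (x : Σ p : Fin (n + 2), (Fin ((p : ℕ) + 1) → K) × (Fin ((n + 1 - (p : ℕ)) + 1) → K)) :
    TotCh K n :=
  (if hp : 1 ≤ (x.1 : ℕ) then
    Finsupp.mapDomain
      (fun gs' : Fin (((x.1 : ℕ) - 1) + 1) → K =>
        (⟨⟨(x.1 : ℕ) - 1, by have := x.1.isLt; omega⟩,
          (gs', fun j => x.2.2 (Fin.cast (by
            show (n - ((x.1 : ℕ) - 1)) + 1 = (n + 1 - (x.1 : ℕ)) + 1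
            omega) j))⟩ :
            Σ p : Fin (n + 1), (Fin ((p : ℕ) + 1) → K) × (Fin ((n - (p : ℕ)) + 1) → K)))
      (barDgen K (fun j => x.2.1 (Fin.cast (by omega) j)))
  else 0) +
  (if hq : (x.1 : ℕ) ≤ n then
    ((-1 : ℤ) ^ (x.1 : ℕ)) • Finsupp.mapDomain
      (fun ks' : Fin ((n - (x.1 : ℕ)) + 1) → K =>
        (⟨⟨(x.1 : ℕ), by omega⟩, (x.2.1, ks')⟩ :
            Σ p : Fin (n + 1), (Fin ((p : ℕ) + 1) → K) × (Fin ((n - (p : ℕ)) + 1) → K)))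
      (barDgen K (fun j => x.2.2 (Fin.cast (by omega) j)))
  else 0)

/-- The total differential. -/
noncomputable def totD (n : ℕ) : TotCh K (n + 1) →+ TotCh K n :=
  Finsupp.liftAddHom fun x => (zmultiplesHom (TotCh K n)) (totDgen K x)

/-- A `(p,q)`-shuffle: a permutation of `Fin (p+q)` monotone on the first `p` and the
last `q` letters. -/
def IsShuffle (p q : ℕ) (σ : Equiv.Perm (Fin (p + q))) : Prop :=
  ∀ i j : Fin (p + q), i < j → (((j : ℕ) < p) ∨ (p ≤ (i : ℕ))) → σ i < σ j

/-- Product `g_d ⋯ g_{p-1}` of a tail of a tuple. -/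
def prefixProd {p : ℕ} (gs : Fin p → K) (d : ℕ) : K := ((List.ofFn gs).drop d).prod

/-- The tuple `λ[g₁|…|g_p|k₁|…|k_q]` associated to a `(p,q)`-shuffle `λ`:
`s_{λ(i)} = gᵢ` for `i ≤ p` and
`s_{λ(i)} = (g_{p+λ(i)-i+1}⋯g_p)·k_{i-p}·(g_{p+λ(i)-i+1}⋯g_p)⁻¹` for `i > p`. -/
def shuffleTuple (p q : ℕ) (σ : Equiv.Perm (Fin (p + q))) (gs : Fin p → K)
    (ks : Fin q → K) : Fin (p + q) → K :=
  fun j =>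
    if h : ((σ.symm j : Fin (p + q)) : ℕ) < p then gs ⟨(σ.symm j : Fin (p + q)), h⟩
    else
      prefixProd K gs (p + (j : ℕ) - ((σ.symm j : Fin (p + q)) : ℕ)) *
        ks ⟨((σ.symm j : Fin (p + q)) : ℕ) - p, by
          have := (σ.symm j).isLt; omega⟩ *
        (prefixProd K gs (p + (j : ℕ) - ((σ.symm j : Fin (p + q)) : ℕ)))⁻¹

open scoped Classical in
/-- `τ[g₁|…|g_p‖k₁|…|k_q] = Σ_{λ ∈ Shuff(p,q)} (-1)^|λ| λ[g₁|…|g_p|k₁|…|k_q]`. -/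
noncomputable def tauBar (p q : ℕ) (gs : Fin p → K) (ks : Fin q → K) :
    ((Fin (p + q) → K) →₀ ℤ) :=
  ∑ σ ∈ Finset.univ.filter (fun σ => IsShuffle p q σ),
    (((Equiv.Perm.sign σ : ℤˣ) : ℤ)) • Finsupp.single (shuffleTuple K p q σ gs ks) 1

/-- The shuffle homomorphism on a generator:
`τ(g₁,…,g_p,g‖k₁,…,k_q,k) = Σ_λ (gk)⁻¹·(-1)^|λ| λ[g₁|…|g_p|gk₁g⁻¹|…|gk_qg⁻¹]`. -/
noncomputable def tauGen {p q : ℕ} (x : (Fin (p + 1) → K) × (Fin (q + 1) → K)) :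
    Ch K (p + q) :=
  Finsupp.mapDomain
    (fun t => Fin.snoc t (x.1 (Fin.last p) * x.2 (Fin.last q)))
    (tauBar K p q (Fin.init x.1)
      (fun i => x.1 (Fin.last p) * x.2 i.castSucc * (x.1 (Fin.last p))⁻¹))

/-- Reindexing of chains along an equality of degrees. -/
noncomputable def chCast {m m' : ℕ} (h : m = m') (x : Ch K m) : Ch K m' :=
  Finsupp.mapDomain (fun t (j : Fin (m' + 1)) => t (Fin.cast (by rw [h]) j)) x

/-- The shuffle homomorphism `τ : Tot_n(C_*(EK,ℤ) ⊗ C_*(EK,ℤ)) → C_n(EK,ℤ)`. -/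
noncomputable def tauCh (n : ℕ) : TotCh K n →+ Ch K n :=
  Finsupp.liftAddHom fun s =>
    (zmultiplesHom (Ch K n)) (chCast K (by have := s.1.isLt; omega) (tauGen K s.2))

/-- The augmentation `ε : C₀(EK,ℤ) → ℤ`. -/
noncomputable def aug : Ch K 0 →+ ℤ :=
  Finsupp.liftAddHom fun _ => AddMonoidHom.id ℤ

/-- The augmentation `ε ⊗ ε` on the total complex. -/
noncomputable def augTot : TotCh K 0 →+ ℤ :=
  Finsupp.liftAddHom fun _ => AddMonoidHom.id ℤ

/-- The `K`-action on the basis of `C_n(EK,ℤ)`: `h·(h₁,…,h_{n+1}) = (h₁,…,h_{n+1}h⁻¹)`. -/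
def chActFun (n : ℕ) (g : K) : (Fin (n + 1) → K) → (Fin (n + 1) → K) :=
  fun f j => if (j : ℕ) = n then f j * g⁻¹ else f j

/-- The `K ⋊ K`-action on the basis of the total complex (conjugation action):
`(k,g)·(g₁,…,g_{p+1}‖k₁,…,k_{q+1}) = (g₁,…,g_{p+1}g⁻¹‖gk₁g⁻¹,…,gk_{q+1}g⁻¹k⁻¹)`. -/
def totActFun {n : ℕ} (a : K × K) :
    (Σ p : Fin (n + 1), (Fin ((p : ℕ) + 1) → K) × (Fin ((n - (p : ℕ)) + 1) → K)) →
      (Σ p : Fin (n + 1), (Fin ((p : ℕ) + 1) → K) × (Fin ((n - (p : ℕ)) + 1) → K)) :=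
  fun s =>
    ⟨s.1,
      (fun j => if (j : ℕ) = (s.1 : ℕ) then s.2.1 j * a.2⁻¹ else s.2.1 j,
       fun j =>
        if (j : ℕ) = n - (s.1 : ℕ) then a.2 * s.2.2 j * a.2⁻¹ * a.1⁻¹
        else a.2 * s.2.2 j * a.2⁻¹)⟩


lemma chActFun_snoc {m : ℕ} (g c : K) (t : Fin m → K) :
    chActFun K m g (Fin.snoc t c) = Fin.snoc t (c * g⁻¹) := by
  funext j
  refine Fin.lastCases ?_ (fun i => ?_) j
  · simp [chActFun]
  · have hne : (i : ℕ) ≠ m := i.isLt.ne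
    simp [chActFun, hne]

lemma chCast_mapDomain_chActFun {m m' : ℕ} (e : m = m') (g : K) (y : Ch K m) :
    chCast K e (Finsupp.mapDomain (chActFun K m g) y) =
      Finsupp.mapDomain (chActFun K m' g) (chCast K e y) := by
  subst e
  simp only [chCast, Fin.cast_eq_self]
  exact Finsupp.mapDomain_id.trans (congrArg _ Finsupp.mapDomain_id.symm)

/- Acting by `(k, g)` turns the last entries `g_p, k_q` into `g_p g⁻¹, g k_q g⁻¹ k⁻¹`, so it
leaves every conjugate `g_p k_i g_p⁻¹` unchanged and multiplies `g_p k_q` on the right by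
`(kg)⁻¹`. -/
lemma tauGen_totActFun {n : ℕ} (k g : K)
    (s : Σ p : Fin (n + 1), (Fin ((p : ℕ) + 1) → K) × (Fin ((n - (p : ℕ)) + 1) → K)) :
    tauGen K (totActFun K (k, g) s).2 =
      Finsupp.mapDomain (chActFun K _ (k * g)) (tauGen K s.2) := by
  obtain ⟨p, gs, ks⟩ := s
  have hinit : Fin.init (fun j : Fin (p + 1) => if (j : ℕ) = p then gs j * g⁻¹ else gs j) =
      Fin.init gs := by
    funext j
    simp [Fin.init, j.isLt.ne]
  have hconj : (fun i : Fin (n - p) =>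
        gs (Fin.last p) * g⁻¹ *
          (if (i.castSucc : ℕ) = n - p then g * ks i.castSucc * g⁻¹ * k⁻¹
            else g * ks i.castSucc * g⁻¹) * (gs (Fin.last p) * g⁻¹)⁻¹) =
      fun i => gs (Fin.last p) * ks i.castSucc * (gs (Fin.last p))⁻¹ := by
    funext i
    rw [if_neg (by simp [i.isLt.ne])]
    group
  have hlast : gs (Fin.last p) * g⁻¹ * (g * ks (Fin.last (n - p)) * g⁻¹ * k⁻¹) =
      gs (Fin.last p) * ks (Fin.last (n - p)) * (k * g)⁻¹ := by
    group
  simp only [tauGen, totActFun, Fin.val_last, if_true, hinit, hconj, hlast,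
    ← Finsupp.mapDomain_comp]
  congr 1
  funext t
  exact (chActFun_snoc K _ _ t).symm

lemma tauCh_single {n : ℕ}
    (s : Σ p : Fin (n + 1), (Fin ((p : ℕ) + 1) → K) × (Fin ((n - (p : ℕ)) + 1) → K))
    (b : ℤ) :
    tauCh K n (Finsupp.single s b) =
      b • chCast K (by have := s.1.isLt; omega) (tauGen K s.2) :=
  Finsupp.liftAddHom_apply_single _ _ _

theorem tauCh_mapDomain_totActFun (n : ℕ) (k g : K) (x : TotCh K n) :
    tauCh K n (Finsupp.mapDomain (totActFun K (k, g)) x) =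
      Finsupp.mapDomain (chActFun K n (k * g)) (tauCh K n x) := by
  have hom : (tauCh K n).comp (Finsupp.mapDomain.addMonoidHom (totActFun K (k, g))) =
      (Finsupp.mapDomain.addMonoidHom (chActFun K n (k * g))).comp (tauCh K n) := by
    refine Finsupp.addHom_ext fun s b => ?_
    simp only [AddMonoidHom.comp_apply, Finsupp.mapDomain.addMonoidHom_apply,
      Finsupp.mapDomain_single, tauCh_single, Finsupp.mapDomain_smul]
    exact congrArg (b • ·) ((congrArg (chCast K _) (tauGen_totActFun K k g s)).trans
      (chCast_mapDomain_chActFun K _ _ _))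
  exact DFunLike.congr_fun hom x

lemma aug_mapDomain {α G : Type} (f : α → (Fin 1 → G)) (y : α →₀ ℤ) :
    aug G (Finsupp.mapDomain f y) = y.sum fun _ b => b := by
  simp only [aug, Finsupp.liftAddHom_apply]
  exact Finsupp.sum_mapDomain_index (fun _ => rfl) (fun _ _ _ => rfl)

lemma sum_tauBar_zero_zero (gs ks : Fin 0 → K) :
    (tauBar K 0 0 gs ks).sum (fun _ b => b) = 1 := by
  classical
  have : Subsingleton (Fin (0 + 0)) := inferInstanceAs (Subsingleton (Fin 0))
  have hshuffle : ∀ σ : Equiv.Perm (Fin (0 + 0)), IsShuffle 0 0 σ := fun _ i => i.elim0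
  rw [tauBar, Finset.filter_true_of_mem fun σ _ => hshuffle σ, Finset.univ_unique,
    Subsingleton.elim default 1]
  simp

theorem augTot_eq_aug_tauCh (x : TotCh K 0) : augTot K x = aug K (tauCh K 0 x) := by
  have hom : augTot K = (aug K).comp (tauCh K 0) := by
    refine Finsupp.addHom_ext fun s b => ?_
    obtain ⟨p, y⟩ := s
    obtain rfl : p = 0 := Fin.ext (by have := p.isLt; omega)
    rw [AddMonoidHom.comp_apply, tauCh_single, map_zsmul, chCast, tauGen,
      ← Finsupp.mapDomain_comp, aug_mapDomain]
    erw [sum_tauBar_zero_zero, smul_eq_mul, mul_one]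
    exact Finsupp.liftAddHom_apply_single _ _ _
  exact DFunLike.congr_fun hom x

/-- The shuffle homomorphism `τ` satisfies the equivariance property
`τ((a⁻¹,h⁻¹)·x) = (ha)⁻¹·τ(x)` with respect to the `K ⋊ K`-module structure on the source
and the `K`-module structure on the target via `μ(k,g) = kg`, and it is compatible with
the augmentations: `(ε ⊗ ε)(x) = ε(τ(x))`. -/
theorem stmt_8 :
    (∀ (n : ℕ) (a h : K) (x : TotCh K n),
      tauCh K n (Finsupp.mapDomain (totActFun K (a⁻¹, h⁻¹)) x) =
        Finsupp.mapDomain (chActFun K n ((h * a)⁻¹)) (tauCh K n x)) ∧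
    (∀ x : TotCh K 0, augTot K x = aug K (tauCh K 0 x)) :=
  ⟨fun n a h x => by rw [mul_inv_rev]; exact tauCh_mapDomain_totActFun K n a⁻¹ h⁻¹ x,
    augTot_eq_aug_tauCh K⟩

end Stmt8
end
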